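/- arXiv:2411.03188 — 3 statements merged into one kernel-verified Lean document; each statement's English description precedes it below -/
import Mathlib

section
/- Under the hypotheses ‖f−id‖_{D_δ} ≤ ε and with μ_m = 2δ/(3ε(m−1)), for every k ≤ m and |μ| ≤ μ_m, the finite difference Δ_k of the map f_μ satisfies ‖Δ_k‖_{D_{δ/3}} ≤ 2^{k−1} μ_k ε (|μ|/μ_k)^k. -/
open Metric Set Function Filter Topology

/-- The complex `r`-neighbourhood of a set `D₀ ⊆ ℂⁿ` in the infinity norm. -/
def cnbhd (n : ℕ) (D0 : Set (Fin n → ℂ)) (r : ℝ) : Set (Fin n → ℂ) :=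
  {x | ∃ y ∈ D0, ‖x - y‖ ≤ r}

section Aux

variable {n : ℕ} {D0 : Set (Fin n → ℂ)} {δ ε : ℝ}
  {f : (Fin n → ℂ) → (Fin n → ℂ)}

lemma cnbhd_mono {r s : ℝ} (h : r ≤ s) : cnbhd n D0 r ⊆ cnbhd n D0 s := by
  rintro x ⟨y, hy, hxy⟩
  exact ⟨y, hy, hxy.trans h⟩

lemma cnbhd_add {r s : ℝ} {x v : Fin n → ℂ} (hx : x ∈ cnbhd n D0 r) (hv : ‖v‖ ≤ s) :
    x + v ∈ cnbhd n D0 (r + s) := by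
  rcases hx with ⟨y, hy, hxy⟩
  refine ⟨y, hy, ?_⟩
  have h1 : x + v - y = (x - y) + v := by ring
  rw [h1]
  exact (norm_add_le _ _).trans (add_le_add hxy hv)

lemma cnbhd_nhds {r : ℝ} {x : Fin n → ℂ} (hx : x ∈ cnbhd n D0 r) (hr : r < δ) :
    cnbhd n D0 δ ∈ 𝓝 x := by
  rcases hx with ⟨y, hy, hxy⟩
  have hpos : 0 < δ - r := by linarith
  refine Filter.mem_of_superset (Metric.ball_mem_nhds x hpos) ?_
  intro x' hx'
  refine ⟨y, hy, ?_⟩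
  have h1 : x' - y = (x' - x) + (x - y) := by ring
  rw [h1]
  calc ‖(x' - x) + (x - y)‖ ≤ ‖x' - x‖ + ‖x - y‖ := norm_add_le _ _
    _ ≤ (δ - r) + r := by
        refine add_le_add ?_ hxy
        have := mem_ball_iff_norm.mp hx'
        linarith
    _ = δ := by ring

/-- Location of the iterates of `f_μ`. -/
lemma iter_mem (hε : 0 < ε)
    (hfε : ∀ x ∈ cnbhd n D0 δ, ‖f x - x‖ ≤ ε) (μ : ℂ) :
    ∀ (i : ℕ) (r : ℝ) (x : Fin n → ℂ), x ∈ cnbhd n D0 r →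
      r + i * (‖μ‖ * ε) ≤ δ →
      (fun y => y + μ • (f y - y))^[i] x ∈ cnbhd n D0 (r + i * (‖μ‖ * ε)) := by
  intro i
  induction i with
  | zero => intro r x hx _; simpa using hx
  | succ i ih =>
    intro r x hx hr
    have hstep : (0:ℝ) ≤ ‖μ‖ * ε := by positivity
    have hle : r + i * (‖μ‖ * ε) ≤ r + (i+1 : ℕ) * (‖μ‖ * ε) := by push_cast; nlinarith
    have hy : (fun y => y + μ • (f y - y))^[i] x ∈ cnbhd n D0 (r + i * (‖μ‖ * ε)) :=
      ih r x hx (hle.trans hr)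
    set y := (fun y => y + μ • (f y - y))^[i] x with hydef
    have hyδ : y ∈ cnbhd n D0 δ := cnbhd_mono (hle.trans hr) hy
    have hmove : ‖μ • (f y - y)‖ ≤ ‖μ‖ * ε := by
      rw [norm_smul]
      exact mul_le_mul_of_nonneg_left (hfε y hyδ) (norm_nonneg μ)
    have hit : (fun y => y + μ • (f y - y))^[i+1] x = y + μ • (f y - y) := by
      rw [Function.iterate_succ_apply']
    rw [hit]
    have h2 := cnbhd_add hy hmove
    have heq : r + i * (‖μ‖ * ε) + ‖μ‖ * ε = r + (i+1 : ℕ) * (‖μ‖ * ε) := by push_cast; ring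
    rwa [heq] at h2

/-- Elementary bound `‖Δ_{j+1}‖ ≤ 2^j ‖μ‖ ε`. -/
lemma elem_bound (hε : 0 < ε)
    (hfε : ∀ x ∈ cnbhd n D0 δ, ‖f x - x‖ ≤ ε)
    (Δ : ℂ → ℕ → (Fin n → ℂ) → (Fin n → ℂ))
    (hΔ0 : ∀ μ x, Δ μ 0 x = x)
    (hΔ : ∀ μ k x, Δ μ (k + 1) x = Δ μ k ((x + μ • (f x - x))) - Δ μ k x)
    (μ : ℂ) :
    ∀ (j : ℕ) (r : ℝ) (x : Fin n → ℂ), x ∈ cnbhd n D0 r →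
      r + j * (‖μ‖ * ε) ≤ δ → ‖Δ μ (j+1) x‖ ≤ 2 ^ j * (‖μ‖ * ε) := by
  intro j
  induction j with
  | zero =>
    intro r x hx hr
    have hxδ : x ∈ cnbhd n D0 δ := cnbhd_mono (by simpa using hr) hx
    have h1 : Δ μ 1 x = μ • (f x - x) := by
      rw [hΔ, hΔ0, hΔ0]; abel
    rw [h1, norm_smul]
    simpa using mul_le_mul_of_nonneg_left (hfε x hxδ) (norm_nonneg μ)
  | succ j ih =>
    intro r x hx hr
    have hstep : (0:ℝ) ≤ ‖μ‖ * ε := by positivity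
    have hxδ : x ∈ cnbhd n D0 δ := by
      refine cnbhd_mono ?_ hx
      push_cast at hr ⊢; nlinarith
    have hmove : ‖μ • (f x - x)‖ ≤ ‖μ‖ * ε := by
      rw [norm_smul]
      exact mul_le_mul_of_nonneg_left (hfε x hxδ) (norm_nonneg μ)
    have hFx : x + μ • (f x - x) ∈ cnbhd n D0 (r + ‖μ‖ * ε) := cnbhd_add hx hmove
    have h1 : ‖Δ μ (j+1) (x + μ • (f x - x))‖ ≤ 2 ^ j * (‖μ‖ * ε) := by
      refine ih _ _ hFx ?_
      push_cast at hr ⊢; nlinarith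
    have h2 : ‖Δ μ (j+1) x‖ ≤ 2 ^ j * (‖μ‖ * ε) := by
      refine ih _ _ hx ?_
      push_cast at hr ⊢; nlinarith
    rw [hΔ]
    calc ‖Δ μ (j+1) (x + μ • (f x - x)) - Δ μ (j+1) x‖
        ≤ ‖Δ μ (j+1) (x + μ • (f x - x))‖ + ‖Δ μ (j+1) x‖ := norm_sub_le _ _
      _ ≤ 2 ^ j * (‖μ‖ * ε) + 2 ^ j * (‖μ‖ * ε) := add_le_add h1 h2
      _ = 2 ^ (j+1) * (‖μ‖ * ε) := by ring

/-- Differentiability of `Δ` along differentiable curves. -/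
lemma diff_along (hf : DifferentiableOn ℂ f (cnbhd n D0 δ))
    (Δ : ℂ → ℕ → (Fin n → ℂ) → (Fin n → ℂ))
    (hΔ0 : ∀ μ x, Δ μ 0 x = x)
    (hΔ : ∀ μ k x, Δ μ (k + 1) x = Δ μ k ((x + μ • (f x - x))) - Δ μ k x)
    (μ : ℂ) :
    ∀ (j : ℕ) (c : ℂ → (Fin n → ℂ)) (z : ℂ), DifferentiableAt ℂ c z →
      (∀ i < j, cnbhd n D0 δ ∈ 𝓝 ((fun y => y + μ • (f y - y))^[i] (c z))) →
      DifferentiableAt ℂ (fun w => Δ μ j (c w)) z := by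
  intro j
  induction j with
  | zero =>
    intro c z hc _
    simpa only [hΔ0] using hc
  | succ j ih =>
    intro c z hc hcond
    have hΔrw : (fun w => Δ μ (j+1) (c w))
        = fun w => Δ μ j ((c w) + μ • (f (c w) - c w)) - Δ μ j (c w) := by
      funext w; rw [hΔ]
    rw [hΔrw]
    have hfc : DifferentiableAt ℂ (fun w => f (c w)) z := by
      have h0 := hcond 0 (Nat.succ_pos j)
      simp only [Function.iterate_zero, id_eq] at h0
      exact (hf.differentiableAt h0).comp z hc
    have hc' : DifferentiableAt ℂ (fun w => c w + μ • (f (c w) - c w)) z :=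
      hc.add ((hfc.sub hc).const_smul μ)
    have hcond' : ∀ i < j, cnbhd n D0 δ ∈
        𝓝 ((fun y => y + μ • (f y - y))^[i] ((fun w => c w + μ • (f (c w) - c w)) z)) := by
      intro i hi
      show cnbhd n D0 δ ∈
        𝓝 ((fun y => y + μ • (f y - y))^[i] (c z + μ • (f (c z) - c z)))
      have h1 : (fun y => y + μ • (f y - y))^[i] (c z + μ • (f (c z) - c z))
          = (fun y => y + μ • (f y - y))^[i+1] (c z) := by
        rw [Function.iterate_succ_apply]
      rw [h1]
      exact hcond (i+1) (Nat.succ_lt_succ hi)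
    have hcond'' : ∀ i < j, cnbhd n D0 δ ∈ 𝓝 ((fun y => y + μ • (f y - y))^[i] (c z)) :=
      fun i hi => hcond i (hi.trans (Nat.lt_succ_self j))
    exact (ih _ z hc' hcond').sub (ih c z hc hcond'')

end Aux

/-- Schwarz lemma, closed-bound version. -/
lemma schwarz_closed {E : Type*} [NormedAddCommGroup E] [NormedSpace ℂ E]
    {φ : ℂ → E} {R M : ℝ} (hR : 0 < R)
    (hd : DifferentiableOn ℂ φ (ball (0:ℂ) R))
    (hb : ∀ z ∈ ball (0:ℂ) R, ‖φ z - φ 0‖ ≤ M)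
    {μ : ℂ} (hμ : μ ∈ ball (0:ℂ) R) : ‖φ μ - φ 0‖ ≤ M / R * ‖μ‖ := by
  have key : ∀ η : ℝ, 0 < η → ‖φ μ - φ 0‖ ≤ (M + η) / R * ‖μ‖ := by
    intro η hη
    have hmaps : MapsTo φ (ball (0:ℂ) R) (closedBall (φ 0) (M + η)) := by
      intro z hz
      rw [mem_closedBall, dist_eq_norm]
      exact le_trans (hb z hz) (by linarith)
    have h := Complex.dist_le_div_mul_dist_of_mapsTo_ball hd hmaps hμ
    simpa [dist_eq_norm] using h
  have htend : Tendsto (fun η : ℝ => (M + η) / R * ‖μ‖) (𝓝[>] (0:ℝ))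
      (𝓝 ((M + 0) / R * ‖μ‖)) := by
    apply Tendsto.mono_left _ nhdsWithin_le_nhds
    exact (((continuous_const.add continuous_id).div_const R).mul continuous_const).tendsto 0
  have h2 := ge_of_tendsto htend (eventually_nhdsWithin_of_forall fun η hη => key η hη)
  simpa using h2

/-- Main inductive proposition: Schwarz-improved bound on slightly shrunken domains. -/
lemma main_prop {n : ℕ} {D0 : Set (Fin n → ℂ)} {δ ε : ℝ} (hε : 0 < ε)
    {f : (Fin n → ℂ) → (Fin n → ℂ)}
    (hf : DifferentiableOn ℂ f (cnbhd n D0 δ))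
    (hfε : ∀ x ∈ cnbhd n D0 δ, ‖f x - x‖ ≤ ε)
    (Δ : ℂ → ℕ → (Fin n → ℂ) → (Fin n → ℂ))
    (hΔ0 : ∀ μ x, Δ μ 0 x = x)
    (hΔ : ∀ μ k x, Δ μ (k + 1) x = Δ μ k ((x + μ • (f x - x))) - Δ μ k x)
    (μ : ℂ) :
    ∀ (k : ℕ) (R r : ℝ) (x : Fin n → ℂ), ‖μ‖ < R → 0 ≤ r → x ∈ cnbhd n D0 r →
      r + k * (R * ε) < δ →
      ‖Δ μ (k+1) x‖ ≤ 2 ^ k * R * ε * (‖μ‖ / R) ^ (k+1) := by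
  intro k
  induction k with
  | zero =>
    intro R r x hμR hr hx hdom
    have hR : 0 < R := lt_of_le_of_lt (norm_nonneg μ) hμR
    have hxδ : x ∈ cnbhd n D0 δ := cnbhd_mono (by push_cast at hdom; nlinarith) hx
    have h0 : Δ μ 1 x = μ • (f x - x) := by rw [hΔ, hΔ0, hΔ0]; abel
    rw [h0, norm_smul]
    have h1 : ‖μ‖ * ‖f x - x‖ ≤ ‖μ‖ * ε :=
      mul_le_mul_of_nonneg_left (hfε x hxδ) (norm_nonneg μ)
    calc ‖μ‖ * ‖f x - x‖ ≤ ‖μ‖ * ε := h1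
      _ = 2 ^ 0 * R * ε * (‖μ‖ / R) ^ (0+1) := by field_simp; ring_nf; field_simp
  | succ k ih =>
    intro R r x hμR hr hx hdom
    have hR : 0 < R := lt_of_le_of_lt (norm_nonneg μ) hμR
    have hxδ : x ∈ cnbhd n D0 δ := by
      refine cnbhd_mono ?_ hx
      push_cast at hdom
      nlinarith [Nat.cast_nonneg (α := ℝ) k, mul_pos hR hε]
    have hgx : ‖f x - x‖ ≤ ε := hfε x hxδ
    set v := f x - x with hv
    set M := 2 ^ k * R * ε * (‖μ‖ / R) ^ (k+1) with hM
    have hMnn : 0 ≤ M := by positivity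
    set c : ℂ → (Fin n → ℂ) := fun z => x + z • v with hc
    have hcurve : ∀ z ∈ ball (0:ℂ) R, ‖Δ μ (k+1) (c z)‖ ≤ M := by
      intro z hz
      have hznorm : ‖z‖ < R := by simpa [mem_ball, dist_eq_norm] using hz
      have hmove : ‖z • v‖ ≤ ‖z‖ * ε := by
        rw [norm_smul]
        exact mul_le_mul_of_nonneg_left hgx (norm_nonneg z)
      have hcz : c z ∈ cnbhd n D0 (r + ‖z‖ * ε) := cnbhd_add hx hmove
      refine ih R (r + ‖z‖ * ε) (c z) hμR (by positivity) hcz ?_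
      push_cast at hdom ⊢
      nlinarith
    have hdiff : DifferentiableOn ℂ (fun z => Δ μ (k+1) (c z)) (ball (0:ℂ) R) := by
      intro z hz
      have hznorm : ‖z‖ < R := by simpa [mem_ball, dist_eq_norm] using hz
      refine (diff_along hf Δ hΔ0 hΔ μ (k+1) c z ?_ ?_).differentiableWithinAt
      · exact (differentiableAt_const x).add (differentiableAt_id.smul_const v)
      · intro i hi
        have hmove : ‖z • v‖ ≤ ‖z‖ * ε := by
          rw [norm_smul]; exact mul_le_mul_of_nonneg_left hgx (norm_nonneg z)
        have hcz : c z ∈ cnbhd n D0 (r + ‖z‖ * ε) := cnbhd_add hx hmove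
        have hik : (i : ℝ) ≤ k := by exact_mod_cast Nat.lt_succ_iff.mp hi
        have hiμ : (i:ℝ) * ‖μ‖ ≤ (k:ℝ) * R :=
          mul_le_mul hik hμR.le (norm_nonneg μ) (Nat.cast_nonneg k)
        have hiμε : (i:ℝ) * (‖μ‖ * ε) ≤ (k:ℝ) * (R * ε) := by
          nlinarith [mul_nonneg (sub_nonneg.mpr hiμ) hε.le]
        have hzε : ‖z‖ * ε < R * ε := by
          exact mul_lt_mul_of_pos_right hznorm hε
        push_cast at hdom
        have hiter := iter_mem hε hfε μ i (r + ‖z‖ * ε) (c z) hcz (by linarith)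
        exact cnbhd_nhds hiter (by linarith)
    have h0mem : (0:ℂ) ∈ ball (0:ℂ) R := mem_ball_self hR
    have hb : ∀ z ∈ ball (0:ℂ) R,
        ‖(fun z => Δ μ (k+1) (c z)) z - (fun z => Δ μ (k+1) (c z)) 0‖ ≤ 2 * M := by
      intro z hz
      calc ‖Δ μ (k+1) (c z) - Δ μ (k+1) (c 0)‖
          ≤ ‖Δ μ (k+1) (c z)‖ + ‖Δ μ (k+1) (c 0)‖ := norm_sub_le _ _
        _ ≤ M + M := add_le_add (hcurve z hz) (hcurve 0 h0mem)
        _ = 2 * M := by ring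
    have hμmem : μ ∈ ball (0:ℂ) R := by simpa [mem_ball, dist_eq_norm] using hμR
    have hsch := schwarz_closed hR hdiff hb hμmem
    have hc0 : c 0 = x := by simp [hc]
    have hfinal : Δ μ (k+1+1) x = Δ μ (k+1) (c μ) - Δ μ (k+1) (c 0) := by
      rw [hΔ, hc0]
    rw [hfinal]
    calc ‖Δ μ (k+1) (c μ) - Δ μ (k+1) (c 0)‖ ≤ 2 * M / R * ‖μ‖ := hsch
      _ = 2 ^ (k+1) * R * ε * (‖μ‖ / R) ^ (k+1+1) := by
          rw [hM]; field_simp; ring_nf; field_simp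

/-- With `μ_1 = δ/ε`, `μ_k = 2δ/(3ε(k-1))` for `k ≥ 2`, the finite differences
`Δ_k` of `f_μ = (1-μ)id + μf` satisfy, for `1 ≤ k ≤ m` and `|μ| ≤ μ_m`,
`‖Δ_k‖_{D_{δ/3}} ≤ 2^{k-1} μ_k ε (|μ|/μ_k)^k`. -/
theorem finite_diff_mmp_bound (n : ℕ) (D0 : Set (Fin n → ℂ)) (δ ε : ℝ)
    (hδ : 0 < δ) (hε : 0 < ε)
    (f : (Fin n → ℂ) → (Fin n → ℂ))
    (hf : DifferentiableOn ℂ f (cnbhd n D0 δ))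
    (hfε : ∀ x ∈ cnbhd n D0 δ, ‖f x - x‖ ≤ ε)
    (μfun : ℕ → ℝ)
    (hμ1 : μfun 1 = δ / ε)
    (hμj : ∀ j, 2 ≤ j → μfun j = 2 * δ / (3 * ε * ((j : ℝ) - 1)))
    (Δ : ℂ → ℕ → (Fin n → ℂ) → (Fin n → ℂ))
    (hΔ0 : ∀ μ x, Δ μ 0 x = x)
    (hΔ : ∀ μ k x, Δ μ (k + 1) x = Δ μ k ((x + μ • (f x - x))) - Δ μ k x)
    (m k : ℕ) (hm : 2 ≤ m) (hk1 : 1 ≤ k) (hkm : k ≤ m)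
    (μ : ℂ) (hμ : ‖μ‖ ≤ μfun m) :
    ∀ x ∈ cnbhd n D0 (δ / 3),
      ‖Δ μ k x‖ ≤ 2 ^ (k - 1) * μfun k * ε * (‖μ‖ / μfun k) ^ k := by
  intro x hx
  have hxδ : x ∈ cnbhd n D0 δ := cnbhd_mono (by linarith) hx
  rcases Nat.lt_or_ge k 2 with hk2 | hk2
  · -- k = 1
    have hk : k = 1 := le_antisymm (Nat.lt_succ_iff.mp hk2) hk1
    subst hk
    have h1 : Δ μ 1 x = μ • (f x - x) := by rw [hΔ, hΔ0, hΔ0]; abel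
    rw [h1, norm_smul, hμ1]
    have h2 : ‖μ‖ * ‖f x - x‖ ≤ ‖μ‖ * ε :=
      mul_le_mul_of_nonneg_left (hfε x hxδ) (norm_nonneg μ)
    calc ‖μ‖ * ‖f x - x‖ ≤ ‖μ‖ * ε := h2
      _ = 2 ^ (1-1) * (δ / ε) * ε * (‖μ‖ / (δ / ε)) ^ 1 := by
          field_simp; simp
  · -- k ≥ 2
    obtain ⟨j, rfl⟩ : ∃ j, k = j + 1 := ⟨k - 1, (Nat.succ_pred_eq_of_pos (by omega)).symm⟩
    have hj1 : 1 ≤ j := by omega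
    have hjR : (1:ℝ) ≤ (j:ℝ) := by exact_mod_cast hj1
    set t := μfun (j+1) with htdef
    have ht : t = 2 * δ / (3 * ε * (j : ℝ)) := by
      rw [htdef, hμj (j+1) (by omega)]
      push_cast; ring_nf
    have htpos : 0 < t := by
      rw [ht]; positivity
    have hmt : μfun m ≤ t := by
      rw [ht, hμj m hm]
      have hmR : (j:ℝ) ≤ (m:ℝ) - 1 := by
        have : ((j:ℝ) + 1) ≤ (m:ℝ) := by exact_mod_cast hkm
        linarith
      have h1 : (0:ℝ) < 3 * ε * (j:ℝ) := by positivity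
      have h2 : 3 * ε * (j:ℝ) ≤ 3 * ε * ((m:ℝ) - 1) := by nlinarith
      exact div_le_div_of_nonneg_left (by positivity) h1 h2
    have hμt : ‖μ‖ ≤ t := hμ.trans hmt
    have hsub : j + 1 - 1 = j := by omega
    rw [hsub]
    rcases lt_or_eq_of_le hμt with hlt | heq
    · -- strict: limiting argument over R ↑ t
      have hkey : ∀ R : ℝ, ‖μ‖ < R → R < t →
          ‖Δ μ (j+1) x‖ ≤ 2 ^ j * R * ε * (‖μ‖ / R) ^ (j+1) := by
        intro R hR1 hR2
        refine main_prop hε hf hfε Δ hΔ0 hΔ μ j R (δ/3) x hR1 (by linarith) hx ?_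
        rw [ht] at hR2
        have hRpos : 0 < R := lt_of_le_of_lt (norm_nonneg μ) hR1
        have hlt2 : (j:ℝ) * (R * ε) < 2 * δ / 3 := by
          have h3 : (0:ℝ) < 3 * ε * (j:ℝ) := by positivity
          rw [lt_div_iff₀ h3] at hR2
          nlinarith
        linarith
      have htend : Tendsto (fun R : ℝ => 2 ^ j * R * ε * (‖μ‖ / R) ^ (j+1))
          (𝓝[<] t) (𝓝 (2 ^ j * t * ε * (‖μ‖ / t) ^ (j+1))) := by
        apply Tendsto.mono_left _ nhdsWithin_le_nhds
        have h1 : ContinuousAt (fun R : ℝ => ‖μ‖ / R) t :=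
          continuousAt_const.div continuousAt_id htpos.ne'
        exact ((continuousAt_const.mul continuousAt_id).mul continuousAt_const).mul
          (h1.pow (j+1))
      refine ge_of_tendsto htend ?_
      have hIoo : Ioo ‖μ‖ t ∈ 𝓝[<] t := Ioo_mem_nhdsLT_of_mem ⟨hlt, le_refl t⟩
      filter_upwards [hIoo] with R hR
      exact hkey R hR.1 hR.2
    · -- equality: elementary bound suffices
      have hdom : δ/3 + j * (‖μ‖ * ε) ≤ δ := by
        rw [← heq] at ht
        have h3 : (0:ℝ) < 3 * ε * (j:ℝ) := by positivity
        have hμeq : ‖μ‖ * (3 * ε * (j:ℝ)) = 2 * δ := by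
          rw [ht]; field_simp
        nlinarith
      have helem := elem_bound hε hfε Δ hΔ0 hΔ μ j (δ/3) x hx hdom
      have h1 : (‖μ‖ / t) = 1 := by rw [heq]; field_simp
      calc ‖Δ μ (j+1) x‖ ≤ 2 ^ j * (‖μ‖ * ε) := helem
        _ = 2 ^ j * t * ε * (‖μ‖ / t) ^ (j+1) := by
            rw [h1, one_pow, ← heq]; ring
end

section
/- (Order-one case) If f is analytic on D_δ with ε = ‖f−id‖_{D_δ} < δ, then the time-one map of the vector field X_1(x) = f(x) − x satisfies ‖Φ^1_{X_1} − f‖_{D_0} ≤ 2ε²/δ. -/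
/-- Schwarz-lemma step: an analytic map bounded by `ε` on a `δ`-tube moves points
at distance `≤ ε` from a center by at most `2ε²/δ`. -/
lemma schwarz_step (n : ℕ) (D0 : Set (Fin n → ℂ)) (δ ε : ℝ) (hδ : 0 < δ) (hε : 0 ≤ ε)
    (hεδ : ε < δ) (g : (Fin n → ℂ) → (Fin n → ℂ))
    (hg : DifferentiableOn ℂ g (cnbhd n D0 δ))
    (hgε : ∀ x ∈ cnbhd n D0 δ, ‖g x‖ ≤ ε)
    (x : Fin n → ℂ) (hx : x ∈ D0) (w : Fin n → ℂ) (hw : ‖w - x‖ ≤ ε) :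
    ‖g w - g x‖ ≤ 2 * ε ^ 2 / δ := by
  have hxD : x ∈ cnbhd n D0 δ := ⟨x, hx, by simp [hδ.le]⟩
  rcases eq_or_ne w x with rfl | hne
  · simp only [sub_self, norm_zero]
    positivity
  set v : Fin n → ℂ := w - x with hv
  have hv0 : 0 < ‖v‖ := by
    rw [norm_pos_iff]
    exact sub_ne_zero.mpr hne
  set R₁ : ℝ := δ / ‖v‖ with hR₁
  have hR₁0 : 0 < R₁ := div_pos hδ hv0
  set φ : ℂ → (Fin n → ℂ) := fun z => g (x + z • v) with hφ
  have hmem : ∀ z ∈ Metric.ball (0 : ℂ) R₁, x + z • v ∈ cnbhd n D0 δ := by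
    intro z hz
    refine ⟨x, hx, ?_⟩
    have : ‖z‖ < R₁ := by simpa [Metric.mem_ball, dist_eq_norm] using hz
    have : ‖z‖ * ‖v‖ ≤ δ := by
      rw [hR₁, lt_div_iff₀ hv0] at this
      exact this.le
    simpa [norm_smul] using this
  have hφd : DifferentiableOn ℂ φ (Metric.ball (0 : ℂ) R₁) := by
    apply hg.comp
    · intro z hz
      exact ((differentiable_const x).add ((differentiable_id).smul_const v)).differentiableAt.differentiableWithinAt
    · intro z hz
      exact hmem z hz
  have hφ0 : φ 0 = g x := by simp [hφ]
  have hφ1 : φ 1 = g w := by simp [hφ, hv]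
  have h1mem : (1 : ℂ) ∈ Metric.ball (0 : ℂ) R₁ := by
    simp only [Metric.mem_ball, dist_zero_right, norm_one]
    rw [hR₁, lt_div_iff₀ hv0, one_mul]
    exact hw.trans_lt hεδ
  -- For each η > 0, apply the Schwarz lemma with target radius 2ε + η
  have key : ∀ η : ℝ, 0 < η → ‖g w - g x‖ ≤ 2 * ε ^ 2 / δ + η := by
    intro η hη
    have hmaps : Set.MapsTo φ (Metric.ball (0 : ℂ) R₁)
        (Metric.ball (φ 0) (2 * ε + η * δ / ‖v‖)) := by
      intro z hz
      have h1 : ‖φ z‖ ≤ ε := hgε _ (hmem z hz)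
      have h2 : ‖φ 0‖ ≤ ε := by rw [hφ0]; exact hgε x hxD
      have hpos : 0 < η * δ / ‖v‖ := by positivity
      rw [Metric.mem_ball, dist_eq_norm]
      calc ‖φ z - φ 0‖ ≤ ‖φ z‖ + ‖φ 0‖ := norm_sub_le _ _
        _ ≤ 2 * ε := by linarith
        _ < 2 * ε + η * δ / ‖v‖ := by linarith
    have hs := Complex.dist_le_div_mul_dist_of_mapsTo_ball hφd (hmaps.mono_right Metric.ball_subset_closedBall) h1mem
    have hd1 : dist (1 : ℂ) 0 = 1 := by simp
    rw [hd1, mul_one, dist_eq_norm, hφ1, hφ0] at hs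
    have hcalc : (2 * ε + η * δ / ‖v‖) / R₁ = (2 * ε + η * δ / ‖v‖) * ‖v‖ / δ := by
      rw [hR₁]
      field_simp
    rw [hcalc] at hs
    have hvε : ‖v‖ ≤ ε := hw
    have hexpand : (2 * ε + η * δ / ‖v‖) * ‖v‖ / δ = 2 * ε * ‖v‖ / δ + η := by
      field_simp
    rw [hexpand] at hs
    refine hs.trans (add_le_add_left ((div_le_div_iff_of_pos_right hδ).mpr ?_) η)
    nlinarith
  exact le_of_forall_pos_le_add key

/-- Order-one case: if `f` is analytic on `D_δ` with `‖f - id‖_{D_δ} ≤ ε < δ`,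
then the time-one map of `X₁ = f - id` satisfies
`‖Φ¹_{X₁} - f‖_{D₀} ≤ 2ε²/δ`. -/
theorem order_one_case (n : ℕ)
    (D0 : Set (Fin n → ℂ)) (δ ε : ℝ) (hδ : 0 < δ) (hε : 0 ≤ ε) (hεδ : ε < δ)
    (f : (Fin n → ℂ) → (Fin n → ℂ))
    (hf : DifferentiableOn ℂ f (cnbhd n D0 δ))
    (hfε : ∀ x ∈ cnbhd n D0 δ, ‖f x - x‖ ≤ ε)
    (X : (Fin n → ℂ) → (Fin n → ℂ)) (hX : ∀ x, X x = f x - x)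
    (Φ : (Fin n → ℂ) → (Fin n → ℂ))
    (hΦ : ∀ x ∈ D0, ∃ γ : ℝ → (Fin n → ℂ), γ 0 = x ∧
      (∀ t ∈ Set.Icc (0 : ℝ) 1, HasDerivAt γ (X (γ t)) t) ∧ γ 1 = Φ x) :
    ∀ x ∈ D0, ‖Φ x - f x‖ ≤ 2 * ε ^ 2 / δ := by
  intro x hx
  obtain ⟨γ, hγ0, hγd, hγ1⟩ := hΦ x hx
  have hxD : x ∈ cnbhd n D0 δ := ⟨x, hx, by simp [hδ.le]⟩
  set g : (Fin n → ℂ) → (Fin n → ℂ) := fun y => f y - y with hgdef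
  have hgd : DifferentiableOn ℂ g (cnbhd n D0 δ) := hf.sub differentiableOn_id
  have hgε : ∀ y ∈ cnbhd n D0 δ, ‖g y‖ ≤ ε := hfε
  have hcont : ContinuousOn γ (Set.Icc 0 1) :=
    fun t ht => (hγd t ht).continuousAt.continuousWithinAt
  -- Step B: the curve stays within `t * ε` of `x`
  set s : Set ℝ := {t | ‖γ t - x‖ ≤ t * ε} with hsdef
  have hclosed : IsClosed (s ∩ Set.Icc 0 1) := by
    rw [Set.inter_comm]
    have h1 : ContinuousOn (fun t => ‖γ t - x‖ - t * ε) (Set.Icc 0 1) :=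
      ((hcont.sub continuousOn_const).norm).sub (continuousOn_id.mul continuousOn_const)
    have h2 := h1.preimage_isClosed_of_isClosed isClosed_Icc (isClosed_Iic (a := (0:ℝ)))
    convert h2 using 2
    ext t
    simp [hsdef, sub_nonpos]
  have h0s : (0:ℝ) ∈ s := by simp [hsdef, hγ0]
  have hstep : ∀ t ∈ s ∩ Set.Ico 0 1, s ∈ nhdsWithin t (Set.Ioi t) := by
    rintro t ⟨hts, ht0, ht1⟩
    have hγtx : ‖γ t - x‖ ≤ t * ε := hts
    have hγtδ : ‖γ t - x‖ < δ := hγtx.trans_lt (by nlinarith)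
    have hcA : ContinuousAt (fun u => ‖γ u - x‖) t :=
      ((hγd t ⟨ht0, ht1.le⟩).continuousAt.sub continuousAt_const).norm
    have hnb : {u : ℝ | ‖γ u - x‖ < δ} ∈ nhds t :=
      hcA.preimage_mem_nhds (Iio_mem_nhds hγtδ)
    obtain ⟨r, hr0, hr⟩ := Metric.mem_nhds_iff.mp hnb
    set b : ℝ := min (t + r / 2) 1 with hbdef
    have htb : t < b := lt_min (by linarith) ht1
    have hb1 : b ≤ 1 := min_le_right _ _
    have hIccsub : Set.Icc t b ⊆ Set.Icc (0:ℝ) 1 :=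
      Set.Icc_subset_Icc ht0 hb1
    have htube : ∀ u ∈ Set.Icc t b, γ u ∈ cnbhd n D0 δ := by
      intro u hu
      refine ⟨x, hx, le_of_lt ?_⟩
      apply hr
      rw [Metric.mem_ball, Real.dist_eq, abs_of_nonneg (by linarith [hu.1])]
      have : u ≤ t + r / 2 := hu.2.trans (min_le_left _ _)
      linarith
    have hderiv : ∀ u ∈ Set.Icc t b, HasDerivWithinAt γ (X (γ u)) (Set.Icc t b) u :=
      fun u hu => (hγd u (hIccsub hu)).hasDerivWithinAt
    have hbound : ∀ u ∈ Set.Ico t b, ‖X (γ u)‖ ≤ ε := by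
      intro u hu
      rw [hX]
      exact hfε _ (htube u (Set.Ico_subset_Icc_self hu))
    have hMVT := norm_image_sub_le_of_norm_deriv_le_segment' hderiv hbound
    have hsub2 : Set.Ioc t b ⊆ s := by
      intro u hu
      have h1 : ‖γ u - γ t‖ ≤ ε * (u - t) := hMVT u (Set.Ioc_subset_Icc_self hu)
      have h2 : ‖γ u - x‖ ≤ ‖γ u - γ t‖ + ‖γ t - x‖ := by
        have := norm_add_le (γ u - γ t) (γ t - x)
        simpa using this
      show ‖γ u - x‖ ≤ u * ε
      have := hu.1
      nlinarith
    exact Filter.mem_of_superset (Ioc_mem_nhdsGT_of_mem ⟨le_rfl, htb⟩) hsub2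
  have hsub : Set.Icc (0:ℝ) 1 ⊆ s :=
    hclosed.Icc_subset_of_forall_mem_nhdsWithin h0s hstep
  have hmaps : Set.MapsTo γ (Set.Icc (0:ℝ) 1) (cnbhd n D0 δ) := by
    intro t ht
    refine ⟨x, hx, ?_⟩
    have h1 : ‖γ t - x‖ ≤ t * ε := hsub ht
    nlinarith [ht.1, ht.2]
  -- Step C: FTC and the integral bound
  have hXcont : ContinuousOn (fun t => X (γ t)) (Set.Icc (0:ℝ) 1) := by
    have : (fun t => X (γ t)) = fun t => f (γ t) - γ t := by
      funext t; rw [hX]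
    rw [this]
    exact (hf.continuousOn.comp hcont hmaps).sub hcont
  have hint : IntervalIntegrable (fun t => X (γ t)) MeasureTheory.volume 0 1 := by
    apply ContinuousOn.intervalIntegrable
    rwa [Set.uIcc_of_le zero_le_one]
  have hFTC : ∫ t in (0:ℝ)..1, X (γ t) = γ 1 - γ 0 := by
    apply intervalIntegral.integral_eq_sub_of_hasDerivAt
    · intro t ht
      exact hγd t (by rwa [Set.uIcc_of_le zero_le_one] at ht)
    · exact hint
  have hintc : IntervalIntegrable (fun _ : ℝ => g x) MeasureTheory.volume 0 1 :=
    intervalIntegrable_const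
  have hsplit : ∫ t in (0:ℝ)..1, (X (γ t) - g x) = Φ x - f x := by
    rw [intervalIntegral.integral_sub hint hintc, hFTC, intervalIntegral.integral_const]
    rw [hγ0, hγ1, hgdef]
    simp only [sub_zero, one_smul]
    abel
  have hbd : ‖∫ t in (0:ℝ)..1, (X (γ t) - g x)‖ ≤ 2 * ε ^ 2 / δ * |(1:ℝ) - 0| := by
    apply intervalIntegral.norm_integral_le_of_norm_le_const
    intro t ht
    rw [Set.uIoc_of_le zero_le_one] at ht
    have htI : t ∈ Set.Icc (0:ℝ) 1 := Set.Ioc_subset_Icc_self ht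
    have hwε : ‖γ t - x‖ ≤ ε := by
      have h1 : ‖γ t - x‖ ≤ t * ε := hsub htI
      nlinarith [htI.1, htI.2]
    have := schwarz_step n D0 δ ε hδ hε hεδ g hgd hgε x hx (γ t) hwε
    rw [hX]
    exact this
  rw [hsplit] at hbd
  simpa using hbd
end

section
/- For the flow of an analytic vector field Y, the time-t map admits the Taylor expansion Φ^t_Y = id + ∑_{k=1}^m (t^k/k!) L_Y^k id + R_m(t), where L_Y g = Y·∇g componentwise and the remainder R_m(t) is O(t^{m+1}‖Y‖^{m+1}) in an appropriate analytic norm. -/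
open Metric Set Complex Real Filter Topology


/-- The Lie derivative operator `L_Y g = Y·∇g`, acting componentwise. -/
noncomputable def Lop (n : ℕ) (Y : (Fin n → ℂ) → (Fin n → ℂ))
    (g : (Fin n → ℂ) → (Fin n → ℂ)) : (Fin n → ℂ) → (Fin n → ℂ) :=
  fun x => fderiv ℂ g x (Y x)



noncomputable section

variable {F : Type*} [NormedAddCommGroup F] [NormedSpace ℂ F]

private lemma diffAt_of_subsingleton {E' : Type*} [NormedAddCommGroup E'] [NormedSpace ℂ E']
    [Subsingleton E'] (g : E' → F) (x : E') : DifferentiableAt ℂ g x := by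
  have : g = fun _ => g x := funext fun y => by rw [Subsingleton.elim y x]
  rw [this]; exact differentiableAt_const _

/-- Directional Cauchy estimate. -/
lemma line_deriv_bound {E : Type*} [NormedAddCommGroup E] [NormedSpace ℂ E]
    {g : E → F} {x v : E} {δ M : ℝ} (hδ : 0 < δ)
    (hg : ∀ y ∈ closedBall x δ, DifferentiableAt ℂ g y)
    (hM : ∀ y ∈ closedBall x δ, ‖g y‖ ≤ M) :
    ‖fderiv ℂ g x v‖ ≤ M / δ * ‖v‖ := by
  rcases eq_or_ne v 0 with rfl | hv
  · simp
  have hv' : (0:ℝ) < ‖v‖ := norm_pos_iff.2 hv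
  set R : ℝ := δ / ‖v‖ with hRdef
  have hR : 0 < R := div_pos hδ hv'
  set h : ℂ → F := fun z => g (x + z • v) with hhdef
  have hmap : ∀ z ∈ closedBall (0:ℂ) R, x + z • v ∈ closedBall x δ := by
    intro z hz
    simp only [mem_closedBall, dist_eq_norm] at hz ⊢
    have : ‖x + z • v - x‖ = ‖z‖ * ‖v‖ := by
      rw [add_sub_cancel_left, norm_smul]
    rw [this]
    calc ‖z‖ * ‖v‖ ≤ R * ‖v‖ := by
          apply mul_le_mul_of_nonneg_right _ hv'.le
          simpa using hz
      _ = δ := div_mul_cancel₀ _ hv'.ne'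
  have hline : ∀ z : ℂ, DifferentiableAt ℂ (fun w : ℂ => x + w • v) z := fun z =>
    (differentiableAt_id.smul_const v).const_add x
  have hdiff : ∀ z ∈ closedBall (0:ℂ) R, DifferentiableAt ℂ h z := fun z hz =>
    (hg _ (hmap z hz)).comp z (hline z)
  have hDCC : DiffContOnCl ℂ h (ball 0 R) :=
    ⟨fun z hz => (hdiff z (ball_subset_closedBall hz)).differentiableWithinAt,
     fun z hz => (hdiff z (closure_ball_subset_closedBall hz)).continuousAt.continuousWithinAt⟩
  have hsphere : ∀ z ∈ sphere (0:ℂ) R, ‖h z‖ ≤ M := fun z hz =>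
    hM _ (hmap z (sphere_subset_closedBall hz))
  have key : ‖deriv h 0‖ ≤ M / R :=
    Complex.norm_deriv_le_of_forall_mem_sphere_norm_le hR hDCC hsphere
  have h1 : HasDerivAt (fun z : ℂ => x + z • v) v 0 := by
    simpa using ((hasDerivAt_id (0:ℂ)).smul_const v).const_add x
  have hd : HasDerivAt h (fderiv ℂ g x v) 0 := by
    have hx0 : x + (0:ℂ) • v = x := by simp
    have hgx := (hg x (mem_closedBall_self hδ.le)).hasFDerivAt
    rw [← hx0] at hgx
    simpa [Function.comp_def] using hgx.comp_hasDerivAt 0 h1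
  rw [← hd.deriv]
  calc ‖deriv h 0‖ ≤ M / R := key
    _ = M / δ * ‖v‖ := by
      rw [hRdef, div_div_eq_mul_div, div_mul_eq_mul_div, mul_comm]

/-- Cauchy estimate for the operator norm of the derivative. -/
lemma fderiv_norm_le_of_ball {E : Type*} [NormedAddCommGroup E] [NormedSpace ℂ E]
    {g : E → F} {x : E} {δ M : ℝ} (hδ : 0 < δ)
    (hg : ∀ y ∈ closedBall x δ, DifferentiableAt ℂ g y)
    (hM : ∀ y ∈ closedBall x δ, ‖g y‖ ≤ M) :
    ‖fderiv ℂ g x‖ ≤ M / δ := by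
  have hM0 : 0 ≤ M := le_trans (norm_nonneg _) (hM x (mem_closedBall_self hδ.le))
  exact ContinuousLinearMap.opNorm_le_bound _ (div_nonneg hM0 hδ.le)
    (fun v => line_deriv_bound hδ hg hM)
set_option maxHeartbeats 2000000 in
set_option synthInstance.maxHeartbeats 1000000 in
/-- Holomorphic functions on an open subset of `ℂⁿ` have differentiable derivative. -/
lemma fderiv_differentiableAt {n : ℕ}
    {F : Type*} [NormedAddCommGroup F] [NormedSpace ℂ F] [CompleteSpace F]
    {f : (Fin n → ℂ) → F} {U : Set (Fin n → ℂ)} (hU : IsOpen U)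
    (hf : ∀ x ∈ U, DifferentiableAt ℂ f x) {x₀ : Fin n → ℂ} (hx₀ : x₀ ∈ U) :
    DifferentiableAt ℂ (fun x => fderiv ℂ f x) x₀ := by
  rcases isEmpty_or_nonempty (Fin n) with hn | hn
  · haveI : Subsingleton (Fin n → ℂ) := ⟨fun a b => funext fun i => hn.elim i⟩
    exact diffAt_of_subsingleton _ _
  -- choose a radius r with closedBall x₀ (3r) ⊆ U
  obtain ⟨ε, hε, hsub⟩ := Metric.nhds_basis_closedBall.mem_iff.1 (hU.mem_nhds hx₀)
  set r : ℝ := ε / 3 with hrdef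
  have hr : 0 < r := by positivity
  have h3r : closedBall x₀ (3 * r) ⊆ U := by
    have : 3 * r = ε := by rw [hrdef]; ring
    rwa [this]
  -- bound on f
  have hcont : ContinuousOn f (closedBall x₀ (3 * r)) := fun y hy =>
    (hf y (h3r hy)).continuousAt.continuousWithinAt
  obtain ⟨M, hM⟩ := (isCompact_closedBall x₀ (3 * r)).exists_bound_of_continuousOn hcont
  have hM0 : 0 ≤ M := le_trans (norm_nonneg _) (hM x₀ (mem_closedBall_self (by positivity)))
  -- derivative bound on the 2r-ball
  have hdiff2r : ∀ x ∈ closedBall x₀ (2 * r), ∀ y ∈ closedBall x r, DifferentiableAt ℂ f y := by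
    intro x hx y hy
    apply hf
    apply h3r
    exact (closedBall_subset_closedBall' (by
      rw [mem_closedBall] at hx; linarith)) hy
  have dbound : ∀ x ∈ closedBall x₀ (2 * r), ‖fderiv ℂ f x‖ ≤ M / r := by
    intro x hx
    refine fderiv_norm_le_of_ball hr (hdiff2r x hx) ?_
    intro y hy
    exact hM y ((closedBall_subset_closedBall' (by
      rw [mem_closedBall] at hx; linarith)) hy)
  -- Lipschitz estimate for fderiv f on a smaller ball
  have lip : ∀ x ∈ closedBall x₀ (5 / 4 * r), ∀ y ∈ closedBall x₀ (5 / 4 * r),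
      ‖fderiv ℂ f x - fderiv ℂ f y‖ ≤ 2 * M / r ^ 2 * ‖x - y‖ := by
    intro x hx y hy
    rw [mem_closedBall, dist_eq_norm] at hx hy
    set c : Fin n → ℂ := y - x with hcdef
    set gd : (Fin n → ℂ) → F := fun u => f u - f (u + c) with hgddef
    -- membership facts
    have hmem : ∀ u ∈ closedBall x (r / 2), u ∈ closedBall x₀ (2 * r) ∧
        u + c ∈ closedBall x₀ (2 * r) := by
      intro u hu
      rw [mem_closedBall, dist_eq_norm] at hu
      constructor
      · rw [mem_closedBall, dist_eq_norm]
        calc ‖u - x₀‖ = ‖(u - x) + (x - x₀)‖ := by ring_nf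
          _ ≤ ‖u - x‖ + ‖x - x₀‖ := norm_add_le _ _
          _ ≤ 2 * r := by linarith
      · rw [mem_closedBall, dist_eq_norm]
        calc ‖u + c - x₀‖ = ‖(u - x) + (y - x₀)‖ := by rw [hcdef]; ring_nf
          _ ≤ ‖u - x‖ + ‖y - x₀‖ := norm_add_le _ _
          _ ≤ 2 * r := by linarith
    have hUmem : ∀ z ∈ closedBall x₀ (2 * r), DifferentiableAt ℂ f z := fun z hz =>
      hf z (h3r (closedBall_subset_closedBall (by linarith) hz))
    -- gd is differentiable with explicit derivative
    have htrans : ∀ u ∈ closedBall x (r / 2),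
        HasFDerivAt gd (fderiv ℂ f u - fderiv ℂ f (u + c)) u := by
      intro u hu
      obtain ⟨h1, h2⟩ := hmem u hu
      have ht : HasFDerivAt (fun w => f (w + c)) (fderiv ℂ f (u + c)) u := by
        have hid : HasFDerivAt (fun w : Fin n → ℂ => w + c) (ContinuousLinearMap.id ℂ _) u :=
          (hasFDerivAt_id u).add_const c
        simpa [Function.comp_def] using ((hUmem _ h2).hasFDerivAt).comp u hid
      exact ((hUmem _ h1).hasFDerivAt).sub ht
    -- sup bound on gd
    have hgdM : ∀ u ∈ closedBall x (r / 2), ‖gd u‖ ≤ M / r * ‖c‖ := by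
      intro u hu
      obtain ⟨h1, h2⟩ := hmem u hu
      have := (convex_closedBall x₀ (2 * r)).norm_image_sub_le_of_norm_fderiv_le
        hUmem dbound h2 h1
      calc ‖gd u‖ = ‖f u - f (u + c)‖ := rfl
        _ ≤ M / r * ‖u - (u + c)‖ := this
        _ = M / r * ‖c‖ := by rw [show u - (u + c) = -c by ring, norm_neg]
    -- Cauchy estimate for fderiv gd at x
    have hkey : ‖fderiv ℂ gd x‖ ≤ M / r * ‖c‖ / (r / 2) :=
      fderiv_norm_le_of_ball (by positivity)
        (fun u hu => ((htrans u hu).differentiableAt)) hgdM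
    have hx_mem : x ∈ closedBall x (r / 2) := mem_closedBall_self (by positivity)
    have hfd : fderiv ℂ gd x = fderiv ℂ f x - fderiv ℂ f y := by
      rw [(htrans x hx_mem).fderiv]
      congr 1
      rw [hcdef]; congr 1; ring
    rw [← hfd]
    calc ‖fderiv ℂ gd x‖ ≤ M / r * ‖c‖ / (r / 2) := hkey
      _ = 2 * M / r ^ 2 * ‖x - y‖ := by
        rw [hcdef, show y - x = -(x - y) by ring, norm_neg]
        field_simp
  -- continuity of fderiv f on the 5r/4-ball
  have contOn : ContinuousOn (fun u => fderiv ℂ f u) (closedBall x₀ (5 / 4 * r)) := by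
    have : LipschitzOnWith (Real.toNNReal (2 * M / r ^ 2)) (fun u => fderiv ℂ f u)
        (closedBall x₀ (5 / 4 * r)) := by
      rw [lipschitzOnWith_iff_norm_sub_le]
      intro x hx y hy
      refine le_trans (lip x hx y hy) ?_
      gcongr
      exact Real.le_coe_toNNReal _
    exact this.continuousOn
  -- basis vectors
  set e : Fin n → (Fin n → ℂ) := fun j => Pi.single j (1 : ℂ) with hedef
  have he : ∀ j, ‖e j‖ = 1 := by
    intro j
    refine le_antisymm ?_ ?_
    · refine (pi_norm_le_iff_of_nonneg zero_le_one).2 fun i => ?_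
      rcases eq_or_ne i j with rfl | hij
      · simp [hedef]
      · simp [hedef, Pi.single_eq_of_ne hij]
    · simpa [hedef] using norm_le_pi_norm (e j) j
  -- each directional derivative is differentiable at x₀
  have hgj : ∀ j, DifferentiableAt ℂ (fun x => fderiv ℂ f x (e j)) x₀ := by
    intro j
    set w : ℝ → ℂ := fun θ => circleMap 0 r θ with hwdef
    set a : ℝ → ℂ := fun θ => w θ * I * w θ ^ (-2 : ℤ) with hadef
    have hwnorm : ∀ θ, ‖w θ‖ = r := fun θ => by
      rw [hwdef]; simpa [abs_of_pos hr] using Complex.abs_circleMap_zero r θ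
    have hanorm : ∀ θ, ‖a θ‖ = r⁻¹ := by
      intro θ
      rw [hadef]
      simp only [norm_mul, norm_zpow, Complex.norm_I]
      rw [hwnorm θ]
      rw [zpow_neg, zpow_two, mul_one, mul_inv, ← mul_assoc,
        mul_inv_cancel₀ hr.ne', one_mul]
    have hwc : Continuous w := continuous_circleMap 0 r
    have hac : Continuous a := by
      refine (hwc.mul continuous_const).mul (hwc.zpow₀ (-2) fun θ => Or.inl ?_)
      rw [hwdef]; exact circleMap_ne_center hr.ne'
    have hshift : ∀ x ∈ closedBall x₀ (r / 2), ∀ θ : ℝ,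
        x + w θ • e j ∈ closedBall x₀ (3 / 2 * r) := by
      intro x hx θ
      rw [mem_closedBall, dist_eq_norm] at hx ⊢
      calc ‖x + w θ • e j - x₀‖ ≤ ‖x - x₀‖ + ‖w θ • e j‖ := by
            rw [show x + w θ • e j - x₀ = (x - x₀) + w θ • e j by ring]
            exact norm_add_le _ _
        _ ≤ r / 2 + r := by
            rw [norm_smul, hwnorm θ, he j, mul_one]; linarith
        _ ≤ 3 / 2 * r := by linarith
    set G : (Fin n → ℂ) → ℝ → F := fun x θ => a θ • f (x + w θ • e j) with hGdef
    set G' : (Fin n → ℂ) → ℝ → (Fin n → ℂ) →L[ℂ] F :=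
      fun x θ => a θ • fderiv ℂ f (x + w θ • e j) with hG'def
    have hfc32 : ∀ z ∈ closedBall x₀ (3 / 2 * r), ContinuousAt f z := fun z hz =>
      (hf z (h3r (closedBall_subset_closedBall (by linarith) hz))).continuousAt
    have hGc : ∀ x ∈ closedBall x₀ (r / 2), Continuous (G x) := by
      intro x hx
      have hpath : Continuous fun θ => x + w θ • e j :=
        continuous_const.add (hwc.smul continuous_const)
      have hfp : Continuous (f ∘ fun θ => x + w θ • e j) :=
        hcont.comp_continuous hpath fun θ =>
          closedBall_subset_closedBall (by linarith) (hshift x hx θ)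
      exact hac.smul hfp
    have hG'c0 : Continuous (G' x₀) := by
      have hpath : Continuous fun θ => x₀ + w θ • e j :=
        continuous_const.add (hwc.smul continuous_const)
      have hmaps : ∀ θ : ℝ, x₀ + w θ • e j ∈ closedBall x₀ (5 / 4 * r) := by
        intro θ
        rw [mem_closedBall, dist_eq_norm, add_sub_cancel_left, norm_smul, hwnorm θ, he j,
          mul_one]
        linarith
      have hcomp : Continuous ((fun u => fderiv ℂ f u) ∘ fun θ => x₀ + w θ • e j) :=
        contOn.comp_continuous hpath hmaps
      exact hac.smul hcomp
    have hGdiff : ∀ θ : ℝ, ∀ x ∈ ball x₀ (r / 2),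
        HasFDerivAt (fun y => G y θ) (G' x θ) x := by
      intro θ x hx
      simp only [hGdef, hG'def]
      have hpt : x + w θ • e j ∈ closedBall x₀ (3 / 2 * r) :=
        hshift x (ball_subset_closedBall hx) θ
      have hptU : DifferentiableAt ℂ f (x + w θ • e j) :=
        hf _ (h3r (closedBall_subset_closedBall (by linarith) hpt))
      have hid : HasFDerivAt (fun y : Fin n → ℂ => y + w θ • e j)
          (ContinuousLinearMap.id ℂ _) x := (hasFDerivAt_id x).add_const _
      have hcomp := (hptU.hasFDerivAt.comp x hid).const_smul (a θ)
      exact hcomp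
    have hG'bound : ∀ θ : ℝ, ∀ x ∈ ball x₀ (r / 2), ‖G' x θ‖ ≤ r⁻¹ * (M / r) := by
      intro θ x hx
      have hpt2 : x + w θ • e j ∈ closedBall x₀ (2 * r) :=
        closedBall_subset_closedBall (by linarith) (hshift x (ball_subset_closedBall hx) θ)
      simp only [hG'def]
      refine le_trans (ContinuousLinearMap.opNorm_smul_le (a θ) (fderiv ℂ f (x + w θ • e j))) ?_
      rw [hanorm θ]
      exact mul_le_mul_of_nonneg_left (dbound _ hpt2) (by positivity)
    have hA : HasFDerivAt (fun x => ∫ θ in (0:ℝ)..(2*π), G x θ)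
        (∫ θ in (0:ℝ)..(2*π), G' x₀ θ) x₀ := by
      apply intervalIntegral.hasFDerivAt_integral_of_dominated_of_fderiv_le
        (s := ball x₀ (r / 2)) (bound := fun _ => r⁻¹ * (M / r)) (ball_mem_nhds x₀ (by positivity))
      · filter_upwards [closedBall_mem_nhds x₀ (show (0:ℝ) < r/2 by positivity)] with x hx
        exact (hGc x hx).aestronglyMeasurable
      · exact (hGc x₀ (mem_closedBall_self (by positivity))).intervalIntegrable _ _
      · exact hG'c0.aestronglyMeasurable
      · filter_upwards with θ hθ x hx
        exact hG'bound θ x hx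
      · exact intervalIntegrable_const
      · filter_upwards with θ hθ x hx
        exact hGdiff θ x hx
    have hloc : ∀ x ∈ closedBall x₀ (r / 2),
        fderiv ℂ f x (e j) = (2 * π * I : ℂ)⁻¹ • ∫ θ in (0:ℝ)..(2*π), G x θ := by
      intro x hx
      set h1 : ℂ → F := fun z => f (x + z • e j) with hh1def
      have hxx : x ∈ closedBall x₀ (3 * r) :=
        closedBall_subset_closedBall (by linarith) hx
      have hmapz : ∀ z ∈ closedBall (0:ℂ) r, x + z • e j ∈ closedBall x₀ (3 / 2 * r) := by
        intro z hz
        rw [mem_closedBall, dist_eq_norm] at hx hz ⊢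
        calc ‖x + z • e j - x₀‖ ≤ ‖x - x₀‖ + ‖z • e j‖ := by
              rw [show x + z • e j - x₀ = (x - x₀) + z • e j by ring]
              exact norm_add_le _ _
          _ ≤ r / 2 + r := by
              rw [norm_smul, he j, mul_one]
              have hzr : ‖z‖ ≤ r := by simpa using hz
              linarith
          _ ≤ 3 / 2 * r := by linarith
      have hdz : ∀ z ∈ closedBall (0:ℂ) r, DifferentiableAt ℂ h1 z := fun z hz =>
        (hf _ (h3r (closedBall_subset_closedBall (by linarith) (hmapz z hz)))).comp z
          ((differentiableAt_id.smul_const (e j)).const_add x)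
      have hDCC : DiffContOnCl ℂ h1 (ball 0 r) :=
        ⟨fun z hz => (hdz z (ball_subset_closedBall hz)).differentiableWithinAt,
         fun z hz => (hdz z (closure_ball_subset_closedBall hz)).continuousAt.continuousWithinAt⟩
      have hcirc : deriv h1 0 = (2*π*I:ℂ)⁻¹ • ∮ z in C(0, r), (z - 0) ^ (-2 : ℤ) • h1 z := by
        have h2 := hDCC.deriv_eq_smul_circleIntegral hr
        have hne : (2*π*I:ℂ) ≠ 0 := by simp [Real.pi_ne_zero, Complex.I_ne_zero]
        have hz : ∀ z : ℂ, (z - 0) ^ (-2:ℤ) = 1 / (z - 0) ^ 2 := fun z => by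
          rw [zpow_neg, one_div]; norm_cast
        simp_rw [hz, h2, smul_smul, inv_mul_cancel₀ hne, one_smul]
      have hderiv : deriv h1 0 = fderiv ℂ f x (e j) := by
        have hline : HasDerivAt (fun z : ℂ => x + z • e j) (e j) 0 := by
          simpa using ((hasDerivAt_id (0:ℂ)).smul_const (e j)).const_add x
        have hx' : x + (0:ℂ) • e j = x := by simp
        have hfx := (hf x (h3r hxx)).hasFDerivAt
        rw [← hx'] at hfx
        have hcd := (hfx.comp_hasDerivAt 0 hline).deriv
        simpa [Function.comp_def] using hcd
      rw [← hderiv, hcirc]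
      congr 1
      unfold circleIntegral
      refine intervalIntegral.integral_congr fun θ hθ => ?_
      simp only [deriv_circleMap, sub_zero, smul_smul]
      rfl
    have hev : (fun x => fderiv ℂ f x (e j)) =ᶠ[𝓝 x₀]
        fun x => (2 * π * I : ℂ)⁻¹ • ∫ θ in (0:ℝ)..(2*π), G x θ :=
      Filter.eventuallyEq_of_mem (closedBall_mem_nhds x₀ (by positivity)) hloc
    exact (hA.differentiableAt.const_smul _).congr_of_eventuallyEq hev
  -- decompose fderiv f through the coordinate functionals
  have hrepr : (fun x => fderiv ℂ f x) = fun x => ∑ j : Fin n,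
      (ContinuousLinearMap.proj (R := ℂ) (φ := fun _ : Fin n => ℂ) j).smulRight
        (fderiv ℂ f x (e j)) := by
    funext x
    apply ContinuousLinearMap.ext
    intro v
    have hv : v = ∑ j : Fin n, v j • e j := by
      conv_lhs => rw [← Finset.univ_sum_single v]
      refine Finset.sum_congr rfl fun j _ => ?_
      ext i
      rcases eq_or_ne i j with rfl | hij
      · simp [hedef]
      · simp [hedef, Pi.single_eq_of_ne hij]
    conv_lhs => rw [hv]
    rw [map_sum, ContinuousLinearMap.sum_apply]
    refine Finset.sum_congr rfl fun j _ => ?_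
    rw [ContinuousLinearMap.smulRight_apply, ContinuousLinearMap.proj_apply, map_smul]
  rw [hrepr]
  apply DifferentiableAt.fun_sum
  intro j _
  exact ((ContinuousLinearMap.smulRightL ℂ (Fin n → ℂ) F
    (ContinuousLinearMap.proj j)).differentiableAt).comp x₀ (hgj j)
end

/-- The `cnbhd` definition, inlined (for the auxiliary lemmas). -/
lemma traj_bound {n : ℕ} {D0 : Set (Fin n → ℂ)} {ρ b : ℝ} (hρ : 0 < ρ)
    {Y : (Fin n → ℂ) → (Fin n → ℂ)}
    (hYb : ∀ x, (∃ y ∈ D0, ‖x - y‖ ≤ ρ) → ‖Y x‖ ≤ b) (hb : b ≤ ρ / 3)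
    {x₀ : Fin n → ℂ} (hx₀ : x₀ ∈ D0) {γ : ℝ → Fin n → ℂ} (hγ0 : γ 0 = x₀)
    (hγ' : ∀ t ∈ Icc (0:ℝ) 1, HasDerivAt γ (Y (γ t)) t) :
    ∀ t ∈ Icc (0:ℝ) 1, ‖γ t - x₀‖ ≤ b * t := by
  have hb0 : 0 ≤ b := le_trans (norm_nonneg _) (hYb x₀ ⟨x₀, hx₀, by simp [hρ.le]⟩)
  set s : Set ℝ := {u | ‖γ u - x₀‖ ≤ b * u} with hsdef
  have hγc : ContinuousOn γ (Icc 0 1) := fun u hu =>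
    (hγ' u hu).continuousAt.continuousWithinAt
  have hclosed : IsClosed (s ∩ Icc 0 1) := by
    have hg : ContinuousOn (fun u => ‖γ u - x₀‖ - b * u) (Icc 0 1) :=
      ((hγc.sub continuousOn_const).norm).sub (continuous_const.mul continuous_id).continuousOn
    have : s ∩ Icc 0 1 = Icc 0 1 ∩ (fun u => ‖γ u - x₀‖ - b * u) ⁻¹' (Iic 0) := by
      ext u
      simp only [hsdef, mem_inter_iff, mem_setOf_eq, mem_preimage, mem_Iic]
      constructor
      · rintro ⟨h1, h2⟩; exact ⟨h2, by linarith⟩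
      · rintro ⟨h1, h2⟩; exact ⟨by linarith, h1⟩
    rw [this]
    exact hg.preimage_isClosed_of_isClosed isClosed_Icc isClosed_Iic
  have h0s : (0:ℝ) ∈ s := by simp [hsdef, hγ0]
  have hmain : Icc (0:ℝ) 1 ⊆ s := by
    apply hclosed.Icc_subset_of_forall_exists_gt h0s
    rintro x ⟨hxs, hxI⟩ y hy
    have hx01 : x ∈ Icc (0:ℝ) 1 := ⟨hxI.1, hxI.2.le⟩
    obtain ⟨ε, hε, hball⟩ := Metric.continuousAt_iff.mp (hγ' x hx01).continuousAt
      (ρ/3) (by positivity)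
    set y' : ℝ := min y (min 1 (x + ε/2)) with hy'def
    have hy'x : x < y' := lt_min hy (lt_min hxI.2 (by linarith))
    have hy'1 : y' ≤ 1 := le_trans (min_le_right _ _) (min_le_left _ _)
    have hy'e : y' ≤ x + ε/2 := le_trans (min_le_right _ _) (min_le_right _ _)
    have hsub : Icc x y' ⊆ Icc (0:ℝ) 1 := fun u hu =>
      ⟨le_trans hxI.1 hu.1, le_trans hu.2 hy'1⟩
    have hnear : ∀ u ∈ Icc x y', ‖γ u - γ x‖ < ρ/3 := by
      intro u hu
      have hd : dist u x < ε := by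
        rw [Real.dist_eq, _root_.abs_of_nonneg (by linarith [hu.1])]
        have := hu.2
        linarith
      simpa [dist_eq_norm] using hball hd
    have hmem : ∀ u ∈ Icc x y', ∃ z ∈ D0, ‖γ u - z‖ ≤ ρ := by
      intro u hu
      refine ⟨x₀, hx₀, ?_⟩
      have h1 := hnear u hu
      have h2 : ‖γ x - x₀‖ ≤ b * x := hxs
      have h3 : b * x ≤ b := by nlinarith [hxI.2.le]
      calc ‖γ u - x₀‖ = ‖(γ u - γ x) + (γ x - x₀)‖ := by ring_nf
        _ ≤ ‖γ u - γ x‖ + ‖γ x - x₀‖ := norm_add_le _ _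
        _ ≤ ρ := by linarith
    have hbd : ∀ u ∈ Icc x y', ‖γ u - γ x‖ ≤ b * (u - x) := by
      apply norm_image_sub_le_of_norm_deriv_le_segment'
        (f' := fun u => Y (γ u))
      · exact fun u hu => (hγ' u (hsub hu)).hasDerivWithinAt
      · exact fun u hu => hYb _ (hmem u (Ico_subset_Icc_self hu))
    refine ⟨y', ?_, hy'x, min_le_left _ _⟩
    have h1 := hbd y' ⟨hy'x.le, le_refl _⟩
    have h2 : ‖γ x - x₀‖ ≤ b * x := hxs
    show ‖γ y' - x₀‖ ≤ b * y'
    calc ‖γ y' - x₀‖ = ‖(γ y' - γ x) + (γ x - x₀)‖ := by ring_nf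
      _ ≤ ‖γ y' - γ x‖ + ‖γ x - x₀‖ := norm_add_le _ _
      _ ≤ b * (y' - x) + b * x := by linarith
      _ = b * y' := by ring
  exact fun t ht => hmain ht


set_option maxHeartbeats 2000000 in
/-- Lie-series expansion of the flow: `Φ^t_Y = id + ∑_{k=1}^m (t^k/k!) L_Y^k id
+ R_m(t)` with remainder `R_m(t) = O(t^{m+1} ‖Y‖^{m+1})`: there is a constant
`C = C(n, D₀, ρ, m)` such that any solution of `ẋ = Y(x)` with `Y` analytic on
`D_ρ`, `‖Y‖_{D_ρ} ≤ b ≤ ρ/3`, starting in `D₀`, satisfies the expansion with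
error at most `C t^{m+1} b^{m+1}` for `t ∈ [0,1]`. -/
theorem lie_series_expansion (n : ℕ) (D0 : Set (Fin n → ℂ)) (ρ : ℝ)
    (hρ : 0 < ρ) (m : ℕ) :
    ∃ C : ℝ, 0 ≤ C ∧
      ∀ (Y : (Fin n → ℂ) → (Fin n → ℂ)) (b : ℝ),
        DifferentiableOn ℂ Y (cnbhd n D0 ρ) →
        (∀ x ∈ cnbhd n D0 ρ, ‖Y x‖ ≤ b) → b ≤ ρ / 3 →
        ∀ x₀ ∈ D0, ∀ γ : ℝ → (Fin n → ℂ), γ 0 = x₀ →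
          (∀ t ∈ Set.Icc (0 : ℝ) 1, HasDerivAt γ (Y (γ t)) t) →
          ∀ t ∈ Set.Icc (0 : ℝ) 1,
            ‖γ t - (x₀ + ∑ k ∈ Finset.Icc 1 m,
                ((t : ℂ) ^ k / (Nat.factorial k : ℂ)) • ((Lop n Y)^[k] id) x₀)‖
              ≤ C * t ^ (m + 1) * b ^ (m + 1) := by
  set δ : ℝ := ρ / (2 * (m + 2)) with hδdef
  have hδ : 0 < δ := by positivity
  refine ⟨1 / (δ ^ m * (Nat.factorial m)), by positivity, ?_⟩
  intro Y b hY hYb hbρ x₀ hx₀ γ hγ0 hγ' t ht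
  have hb0 : 0 ≤ b := le_trans (norm_nonneg _) (hYb x₀ ⟨x₀, hx₀, by simp [hρ.le]⟩)
  set O : Set (Fin n → ℂ) := {x | ∃ y ∈ D0, ‖x - y‖ < ρ} with hOdef
  have hOopen : IsOpen O := by
    have hOu : O = ⋃ y ∈ D0, Metric.ball y ρ := by
      ext x; simp [hOdef, Metric.mem_ball, dist_eq_norm]
    rw [hOu]; exact isOpen_biUnion fun y _ => Metric.isOpen_ball
  have hOsub : O ⊆ cnbhd n D0 ρ := by
    rintro x ⟨y, hy, hxy⟩; exact ⟨y, hy, hxy.le⟩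
  have hYdiff : ∀ x ∈ O, DifferentiableAt ℂ Y x := fun x hx =>
    (hY x (hOsub hx)).differentiableAt (Filter.mem_of_superset (hOopen.mem_nhds hx) hOsub)
  set G : ℕ → (Fin n → ℂ) → (Fin n → ℂ) := fun k => (Lop n Y)^[k] id with hGdef
  have hGsucc : ∀ k, G (k+1) = fun x => fderiv ℂ (G k) x (Y x) := by
    intro k
    rw [hGdef]
    simp only [Function.iterate_succ_apply']
    rfl
  have hGdiffAt : ∀ k, ∀ x ∈ O, DifferentiableAt ℂ (G k) x := by
    intro k
    induction k with
    | zero => exact fun x _ => differentiableAt_id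
    | succ k ih =>
      intro x hx
      rw [hGsucc k]
      exact (fderiv_differentiableAt hOopen ih hx).clm_apply (hYdiff x hx)
  have hcn_sub_O : ∀ {r : ℝ}, r < ρ → ∀ x, (∃ y ∈ D0, ‖x - y‖ ≤ r) → x ∈ O := by
    rintro r hr x ⟨y, hy, hxy⟩; exact ⟨y, hy, lt_of_le_of_lt hxy hr⟩
  have hGbound : ∀ k, k ≤ m → ∀ x, (∃ y ∈ D0, ‖x - y‖ ≤ ρ - (k+1) * δ) →
      ‖G (k+1) x‖ ≤ b * (b / δ) ^ k := by
    intro k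
    induction k with
    | zero =>
      intro _ x hx
      have hx' : x ∈ cnbhd n D0 ρ := by
        obtain ⟨y, hy, hxy⟩ := hx
        refine ⟨y, hy, le_trans hxy ?_⟩
        push_cast
        linarith
      have hG1 : G 1 x = Y x := by
        rw [hGsucc 0]
        show fderiv ℂ (G 0) x (Y x) = Y x
        have hid : G 0 = id := rfl
        rw [hid, fderiv_id, ContinuousLinearMap.id_apply]
      rw [hG1]
      simpa using hYb x hx'
    | succ k ih =>
      intro hk x hx
      have hk' : k ≤ m := by omega
      have hball : ∀ z ∈ Metric.closedBall x δ, ∃ y ∈ D0, ‖z - y‖ ≤ ρ - (k+1) * δ := by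
        intro z hz
        obtain ⟨y, hy, hxy⟩ := hx
        rw [Metric.mem_closedBall, dist_eq_norm] at hz
        refine ⟨y, hy, ?_⟩
        push_cast at hxy ⊢
        calc ‖z - y‖ = ‖(z - x) + (x - y)‖ := by ring_nf
          _ ≤ ‖z - x‖ + ‖x - y‖ := norm_add_le _ _
          _ ≤ ρ - ((k:ℝ)+1) * δ := by linarith
      have hballO : ∀ z ∈ Metric.closedBall x δ, z ∈ O := by
        intro z hz
        refine hcn_sub_O ?_ z (hball z hz)
        have hpos : (0:ℝ) < ((k:ℝ)+1) * δ := by positivity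
        linarith
      have hfb : ‖fderiv ℂ (G (k+1)) x‖ ≤ b * (b / δ) ^ k / δ :=
        fderiv_norm_le_of_ball hδ (fun z hz => hGdiffAt (k+1) z (hballO z hz))
          (fun z hz => ih hk' z (hball z hz))
      have hx' : x ∈ cnbhd n D0 ρ := by
        obtain ⟨y, hy, hxy⟩ := hx
        refine ⟨y, hy, le_trans hxy ?_⟩
        have hpos : (0:ℝ) ≤ ((k:ℝ)+1+1) * δ := by positivity
        push_cast
        linarith
      rw [hGsucc (k+1)]
      calc ‖fderiv ℂ (G (k+1)) x (Y x)‖ ≤ ‖fderiv ℂ (G (k+1)) x‖ * ‖Y x‖ :=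
            ContinuousLinearMap.le_opNorm _ _
        _ ≤ (b * (b / δ) ^ k / δ) * b := by
            apply mul_le_mul hfb (hYb x hx') (norm_nonneg _)
            positivity
        _ = b * (b / δ) ^ (k+1) := by ring
  have htraj : ∀ s ∈ Icc (0:ℝ) 1, ‖γ s - x₀‖ ≤ b * s :=
    traj_bound hρ (fun x hx => hYb x hx) hbρ hx₀ hγ0 hγ'
  have hmδ : ((m:ℝ)+1) * δ ≤ ρ / 2 := by
    rw [hδdef, ← mul_div_assoc, div_le_div_iff₀ (by positivity) two_pos]
    push_cast
    nlinarith [hρ.le]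
  have hmemtraj : ∀ s ∈ Icc (0:ℝ) 1, ∃ y ∈ D0, ‖γ s - y‖ ≤ ρ - ((m:ℝ)+1) * δ := by
    intro s hs
    refine ⟨x₀, hx₀, le_trans (htraj s hs) ?_⟩
    have h1 : b * s ≤ b := by nlinarith [hs.2, hs.1]
    linarith
  have hmemk : ∀ k, k ≤ m → ∀ s ∈ Icc (0:ℝ) 1, ∃ y ∈ D0, ‖γ s - y‖ ≤ ρ - (k+1) * δ := by
    intro k hk s hs
    obtain ⟨y, hy, h⟩ := hmemtraj s hs
    refine ⟨y, hy, le_trans h ?_⟩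
    have hcast : ((k:ℝ)+1) * δ ≤ ((m:ℝ)+1) * δ := by
      apply mul_le_mul_of_nonneg_right _ hδ.le
      have := (Nat.cast_le (α := ℝ)).2 hk
      linarith
    push_cast
    linarith
  have hγO : ∀ s ∈ Icc (0:ℝ) 1, γ s ∈ O := by
    intro s hs
    obtain ⟨y, hy, h⟩ := hmemtraj s hs
    refine ⟨y, hy, lt_of_le_of_lt h ?_⟩
    have hpos : (0:ℝ) < ((m:ℝ)+1) * δ := by positivity
    linarith
  have hchain : ∀ k, ∀ s ∈ Icc (0:ℝ) 1,
      HasDerivAt (fun u => G k (γ u)) (G (k+1) (γ s)) s := by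
    intro k s hs
    have h0 := ((hGdiffAt k (γ s) (hγO s hs)).hasFDerivAt.restrictScalars ℝ).comp_hasDerivAt
      s (hγ' s hs)
    rw [hGsucc k]
    exact h0
  have huD : UniqueDiffOn ℝ (Icc (0:ℝ) 1) := uniqueDiffOn_Icc one_pos
  have hIter : ∀ k, k ≤ m + 1 → ∀ s ∈ Icc (0:ℝ) 1,
      iteratedDerivWithin k γ (Icc 0 1) s = G k (γ s) := by
    intro k
    induction k with
    | zero => intro _ s _; rw [iteratedDerivWithin_zero]; rfl
    | succ k ih =>
      intro hk s hs
      rw [iteratedDerivWithin_succ]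
      have heq : ∀ u ∈ Icc (0:ℝ) 1, iteratedDerivWithin k γ (Icc 0 1) u = G k (γ u) :=
        ih (by omega)
      rw [derivWithin_congr heq (heq s hs)]
      exact ((hchain k s hs).hasDerivWithinAt).derivWithin (huD s hs)
  have hCD : ContDiffOn ℝ (m+1 : ℕ) γ (Icc (0:ℝ) 1) := by
    apply contDiffOn_of_differentiableOn_deriv
    intro j hj
    have hj' : j ≤ m + 1 := by exact_mod_cast hj
    refine DifferentiableOn.congr (f := fun u => G j (γ u)) ?_ (hIter j hj')
    exact fun s hs => ((hchain j s hs).hasDerivWithinAt).differentiableWithinAt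
  set Cb : ℝ := b * (b / δ) ^ m with hCbdef
  have hDbound : ∀ s ∈ Icc (0:ℝ) 1, ‖iteratedDerivWithin (m+1) γ (Icc 0 1) s‖ ≤ Cb := by
    intro s hs
    rw [hIter (m+1) le_rfl s hs]
    exact hGbound m le_rfl (γ s) (hmemk m le_rfl s hs)
  have htay := taylor_mean_remainder_bound (f := γ) (a := 0) (b := 1) (n := m)
    zero_le_one hCD ht hDbound
  have hsc : ∀ (r : ℝ) (v : Fin n → ℂ), r • v = (r : ℂ) • v := fun r v => by
    rw [← Complex.coe_algebraMap, algebraMap_smul]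
  have hTP : taylorWithinEval γ m (Icc (0:ℝ) 1) 0 t
      = x₀ + ∑ k ∈ Finset.Icc 1 m, ((t : ℂ) ^ k / (Nat.factorial k : ℂ)) • G k x₀ := by
    rw [taylor_within_apply]
    have hsplit : Finset.range (m+1) = insert 0 (Finset.Icc 1 m) := by
      ext k
      simp only [Finset.mem_range, Finset.mem_insert, Finset.mem_Icc, Nat.lt_succ_iff]
      omega
    rw [hsplit, Finset.sum_insert (by simp)]
    congr 1
    · simp [hγ0]
    · refine Finset.sum_congr rfl fun k hk => ?_
      have hk1 : k ≤ m + 1 := by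
        simp only [Finset.mem_Icc] at hk
        omega
      rw [hIter k hk1 0 (left_mem_Icc.2 zero_le_one), hγ0, hsc]
      congr 1
      push_cast
      rw [sub_zero]
      ring
  rw [← hγ0] at hTP
  rw [hγ0] at hTP
  rw [← hTP]
  refine le_trans htay (le_of_eq ?_)
  rw [hCbdef, sub_zero, div_pow]
  field_simp
  ring
end
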